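/- arXiv:1501.03932 — 2 statements merged into one kernel-verified Lean document; each statement's English description precedes it below -/
import Mathlib

section
/- Let 𝒜 be a 3-dimensional non-unimodular Lie algebra over K. Then its unimodular ideal I_0 = {a ∈ 𝒜 : tr(ad_a) = 0} is a 2-dimensional abelian ideal, and for any u, v ∉ I_0 there exists a nonzero scalar s with ad_v|_{I_0} = s · ad_u|_{I_0}. Moreover, 𝒜* carries a generic non-flat linear Poisson pair if and only if the endomorphism ad_u|_{I_0} (u ∉ I_0) is not a scalar multiple of the identity; concretely, choosing a basis {e_1,e_2,e_3} with I_0 = span{e_2,e_3}, [e_1,e_2] = a_{22}e_2 + a_{23}e_3, [e_1,e_3] = a_{32}e_2 + a_{33}e_3, the constant compatible Poisson structure Λ_1 = ∂/∂x_1 ∧ (b_2 ∂/∂x_2 + b_3 ∂/∂x_3) gives a flat pair exactly when a_{32}b_2² + (a_{33}-a_{22})b_2 b_3 - a_{23}b_3² = 0. -/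
open Matrix

variable {K : Type*} [RCLike K]

/-- Partial derivative in the `i`-th coordinate direction on `K³`. -/
noncomputable def pd3 (i : Fin 3) (f : (Fin 3 → K) → K) (x : Fin 3 → K) : K :=
  fderiv K f x (Pi.single i 1)

/-- The curl of a 1-form `Σ wᵢ dxᵢ` on `K³`: the vector representing its exterior
derivative. -/
noncomputable def curl3 (w : (Fin 3 → K) → (Fin 3 → K)) (x : Fin 3 → K) : Fin 3 → K :=
  ![pd3 1 (fun y => w y 2) x - pd3 2 (fun y => w y 1) x,
    pd3 2 (fun y => w y 0) x - pd3 0 (fun y => w y 2) x,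
    pd3 0 (fun y => w y 1) x - pd3 1 (fun y => w y 0) x]

/-- The set of generic points of the pair of bivector fields on `K³` represented by the
1-form coefficient vectors `w, w₁` (single Kronecker block pointwise). -/
def genSet (w w1 : (Fin 3 → K) → (Fin 3 → K)) : Set (Fin 3 → K) :=
  {x | ∀ s t : K, ¬(s = 0 ∧ t = 0) → s • w x + t • w1 x ≠ 0}

/-- Flatness of the Poisson pair represented by `(ω, ω₁, Ω)` (coefficient vectors
`w, w₁`) at a point, via the characterization of Proposition 2: near the point there is
a 1-form `λ` with `dω = λ∧ω`, `dω₁ = λ∧ω₁` and `dλ = 0`. -/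
noncomputable def flatAt (w w1 : (Fin 3 → K) → (Fin 3 → K)) (p : Fin 3 → K) : Prop :=
  ∃ U : Set (Fin 3 → K), IsOpen U ∧ p ∈ U ∧
    ∃ lam : (Fin 3 → K) → (Fin 3 → K), DifferentiableOn K lam U ∧
      ∀ x ∈ U, curl3 w x = crossProduct (lam x) (w x)
        ∧ curl3 w1 x = crossProduct (lam x) (w1 x)
        ∧ curl3 lam x = 0

/-!
The form `x ↦ tr (ad x)` vanishes on brackets, so its kernel `I₀` is an ideal containing the
derived algebra, of codimension one since `𝒜` is not unimodular. For a basis with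
`I₀ = span {e 1, e 2}`, the traces of `ad (e 1)` and `ad (e 2)` are the coordinates of
`⁅e 1, e 2⁆`, so `I₀` is abelian, and then `v - (tr ad v / tr ad u) • u ∈ I₀` acts trivially
on `I₀`.

For the pair `ω = w`, `ω₁ = w1 b₂ b₃`: `curl ω = (a₂₂ + a₃₃, 0, 0)`, `curl ω₁ = 0`, and
`ω₁ × ω = (D, 0, 0)` with `D = pencilDet`, whose nonvanishing at `x` is exactly genericity.
Hence near a generic point the equations `curl ω = λ × ω`, `curl ω₁ = λ × ω₁` force
`λ = (a₂₂ + a₃₃) / D • ω₁` in its last two components, and the first component of `curl λ` is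
`-(a₂₂ + a₃₃) Q / D²` with `Q = flatnessForm`. As `a₂₂ + a₃₃ = tr ad (e 0) ≠ 0`,
flatness is `Q = 0`, and `Q` vanishes identically iff `ad (e 0)` is a scalar on `I₀`.
-/

lemma apply_basis_ne_zero_of_ne_zero {F V ι : Type*} [Field F] [AddCommGroup V] [Module F V]
    {f : V →ₗ[F] F} (hf : f ≠ 0) (b : Module.Basis ι F V) {i₀ : ι}
    (h : ∀ i, i ≠ i₀ → b i ∈ LinearMap.ker f) : f (b i₀) ≠ 0 := by
  refine fun h₀ => hf (b.ext fun i => ?_)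
  by_cases hi : i = i₀
  · rw [hi, h₀, LinearMap.zero_apply]
  · rw [LinearMap.mem_ker.1 (h i hi), LinearMap.zero_apply]

section Unimodular

variable (F L : Type*) [Field F] [LieRing L] [LieAlgebra F L]

noncomputable def traceAd : L →ₗ[F] F :=
  (LinearMap.trace F L).comp (LieAlgebra.ad F L : L →ₗ[F] Module.End F L)

variable {F L}

lemma traceAd_apply (x : L) : traceAd F L x = LinearMap.trace F L (LieAlgebra.ad F L x) := rfl

lemma traceAd_lie (x y : L) : traceAd F L ⁅x, y⁆ = 0 := by
  simp only [traceAd_apply, LieAlgebra.ad, LieHom.map_lie, LinearMap.trace_lie]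

lemma traceAd_eq_sum_repr {ι : Type*} [Fintype ι] [DecidableEq ι] (b : Module.Basis ι F L)
    (x : L) : traceAd F L x = ∑ i, b.repr ⁅x, b i⁆ i := by
  simp [traceAd_apply, LinearMap.trace_eq_matrix_trace F b, Matrix.trace,
    LinearMap.toMatrix_apply]

lemma lie_eq_zero_of_traceAd_eq_zero (b : Module.Basis (Fin 3) F L)
    (hder : ∀ x y : L, ⁅x, y⁆ ∈ Submodule.span F {b 1, b 2})
    (h1 : traceAd F L (b 1) = 0) (h2 : traceAd F L (b 2) = 0) : ⁅b 1, b 2⁆ = 0 := by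
  obtain ⟨p₁, q₁, hp₁⟩ := Submodule.mem_span_pair.1 (hder (b 1) (b 0))
  obtain ⟨p₂, q₂, hp₂⟩ := Submodule.mem_span_pair.1 (hder (b 2) (b 0))
  obtain ⟨p, q, hpq⟩ := Submodule.mem_span_pair.1 (hder (b 1) (b 2))
  have h21 : ⁅b 2, b 1⁆ = -(p • b 1 + q • b 2) := by rw [hpq, lie_skew]
  rw [traceAd_eq_sum_repr b, Fin.sum_univ_three, ← hp₁, lie_self, ← hpq] at h1
  rw [traceAd_eq_sum_repr b, Fin.sum_univ_three, ← hp₂, h21, lie_self] at h2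
  have hq : q = 0 := by simpa using h1
  have hp : p = 0 := by simpa using h2
  rw [← hpq, hp, hq, zero_smul, zero_smul, add_zero]

lemma lie_eq_zero_of_mem_span_pair {u v : L} (huv : ⁅u, v⁆ = 0) {x y : L}
    (hx : x ∈ Submodule.span F {u, v}) (hy : y ∈ Submodule.span F {u, v}) : ⁅x, y⁆ = 0 := by
  obtain ⟨a, b, rfl⟩ := Submodule.mem_span_pair.1 hx
  obtain ⟨c, d, rfl⟩ := Submodule.mem_span_pair.1 hy
  simp [huv, ← lie_skew v u]

lemma lie_eq_smul_lie_of_isAbelian_ker (f : L →ₗ[F] F)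
    (hab : ∀ x ∈ LinearMap.ker f, ∀ y ∈ LinearMap.ker f, ⁅x, y⁆ = 0) {u : L} (hu : f u ≠ 0)
    (v : L) {x : L} (hx : x ∈ LinearMap.ker f) : ⁅v, x⁆ = (f v / f u) • ⁅u, x⁆ := by
  have hker : v - (f v / f u) • u ∈ LinearMap.ker f := by
    rw [LinearMap.mem_ker, map_sub, map_smul, smul_eq_mul, div_mul_cancel₀ _ hu, sub_self]
  rw [← sub_eq_zero, ← smul_lie, ← sub_lie]
  exact hab _ hker x hx

end Unimodular

lemma pd3_eq_of_hasFDerivAt {f : (Fin 3 → K) → K} {f' : (Fin 3 → K) →L[K] K} {x : Fin 3 → K}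
    (hf : HasFDerivAt f f' x) (i : Fin 3) : pd3 i f x = f' (Pi.single i 1) := by
  rw [pd3, hf.fderiv]

@[simp]
lemma pd3_const (c : K) (i : Fin 3) (x : Fin 3 → K) : pd3 i (fun _ => c) x = 0 := by
  simp [pd3]

@[simp]
lemma pd3_neg (f : (Fin 3 → K) → K) (i : Fin 3) (x : Fin 3 → K) :
    pd3 i (fun y => -f y) x = -pd3 i f x := by
  simp [pd3, fderiv_fun_neg]

lemma hasFDerivAt_linear (α β : K) (x : Fin 3 → K) :
    HasFDerivAt (fun y : Fin 3 → K => α * y 1 + β * y 2)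
      (α • ContinuousLinearMap.proj (R := K) (φ := fun _ : Fin 3 => K) 1
        + β • ContinuousLinearMap.proj 2) x :=
  ((hasFDerivAt_apply 1 x).const_mul α).add ((hasFDerivAt_apply 2 x).const_mul β)

@[simp]
lemma pd3_linear (α β : K) (i : Fin 3) (x : Fin 3 → K) :
    pd3 i (fun y : Fin 3 → K => α * y 1 + β * y 2) x
      = α * (Pi.single i 1 : Fin 3 → K) 1 + β * (Pi.single i 1 : Fin 3 → K) 2 := by
  simp [pd3_eq_of_hasFDerivAt (hasFDerivAt_linear α β x)]

lemma pd3_const_div {g : (Fin 3 → K) → K} {x : Fin 3 → K} (hg : DifferentiableAt K g x)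
    (hx : g x ≠ 0) (c : K) (i : Fin 3) :
    pd3 i (fun y => c / g y) x = -(c * pd3 i g x) / g x ^ 2 := by
  have h := ((hasDerivAt_inv hx).const_mul c).comp_hasFDerivAt x hg.hasFDerivAt
  rw [show (fun y => c / g y) = (fun t => c * t⁻¹) ∘ g by ext; simp [div_eq_mul_inv]]
  rw [pd3_eq_of_hasFDerivAt h, pd3, _root_.smul_apply, smul_eq_mul]
  ring

lemma curl3_apply_zero_congr {l m : (Fin 3 → K) → Fin 3 → K} {p : Fin 3 → K}
    (h1 : (fun y => l y 1) =ᶠ[nhds p] fun y => m y 1)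
    (h2 : (fun y => l y 2) =ᶠ[nhds p] fun y => m y 2) : curl3 l p 0 = curl3 m p 0 := by
  simp [curl3, pd3, h1.fderiv_eq, h2.fderiv_eq]

lemma forall_smul_add_smul_ne_zero_iff {F : Type*} [Field F] {v u : Fin 3 → F} (hv : v 0 = 0)
    (hu : u 0 = 0) :
    (∀ s t : F, ¬(s = 0 ∧ t = 0) → s • v + t • u ≠ 0) ↔ (v ⨯₃ u) 0 ≠ 0 := by
  rw [cross_apply, cons_val_zero]
  constructor
  · intro h hdet
    have hdep : ∀ s t : F, s * v 1 + t * u 1 = 0 → s * v 2 + t * u 2 = 0 → ¬(s = 0 ∧ t = 0) →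
        False := fun s t h1 h2 hst => h s t hst (by ext j; fin_cases j <;> simp [hv, hu, h1, h2])
    by_cases hv2 : v 2 = 0
    · by_cases hv1 : v 1 = 0
      · exact hdep 1 0 (by simp [hv1]) (by simp [hv2]) (by simp)
      · exact hdep (u 1) (-v 1) (by ring) (by linear_combination -hdet) (by simp [hv1])
    · exact hdep (u 2) (-v 2) (by linear_combination hdet) (by ring) (by simp [hv2])
  · intro hdet s t hst hzero
    have h1 : s * v 1 + t * u 1 = 0 := by simpa using congrFun hzero 1
    have h2 : s * v 2 + t * u 2 = 0 := by simpa using congrFun hzero 2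
    refine hst ⟨(mul_eq_zero.1 ?_).resolve_right hdet, (mul_eq_zero.1 ?_).resolve_right hdet⟩
    · linear_combination u 2 * h1 - u 1 * h2
    · linear_combination v 1 * h2 - v 2 * h1

section LinearPoissonPair

variable (a22 a23 a32 a33 b2 b3 : K)

def liePoissonForm (x : Fin 3 → K) : Fin 3 → K :=
  ![0, -(a32 * x 1 + a33 * x 2), a22 * x 1 + a23 * x 2]

def constForm : (Fin 3 → K) → Fin 3 → K := fun _ => ![0, -b3, b2]

def pencilDet (x : Fin 3 → K) : K := (b2 * a32 - b3 * a22) * x 1 + (b2 * a33 - b3 * a23) * x 2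

def flatnessForm : K := a32 * b2 ^ 2 + (a33 - a22) * b2 * b3 - a23 * b3 ^ 2

noncomputable def flatConnection (x : Fin 3 → K) : Fin 3 → K :=
  ((a22 + a33) / pencilDet a22 a23 a32 a33 b2 b3 x) • constForm b2 b3 x

variable {a22 a23 a32 a33 b2 b3}

@[fun_prop]
lemma differentiable_pencilDet : Differentiable K (pencilDet a22 a23 a32 a33 b2 b3) :=
  fun x => (hasFDerivAt_linear _ _ x).differentiableAt

lemma pd3_pencilDet (i : Fin 3) (x : Fin 3 → K) :
    pd3 i (pencilDet a22 a23 a32 a33 b2 b3) x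
      = (b2 * a32 - b3 * a22) * (Pi.single i 1 : Fin 3 → K) 1
        + (b2 * a33 - b3 * a23) * (Pi.single i 1 : Fin 3 → K) 2 :=
  pd3_linear _ _ i x

lemma isOpen_pencilDet_ne_zero : IsOpen {x | pencilDet a22 a23 a32 a33 b2 b3 x ≠ 0} :=
  isOpen_ne_fun differentiable_pencilDet.continuous continuous_const

lemma flatnessForm_eq : flatnessForm a22 a23 a32 a33 b2 b3
    = b2 * (b2 * a32 - b3 * a22) + b3 * (b2 * a33 - b3 * a23) := by
  unfold flatnessForm; ring

lemma constForm_cross_liePoissonForm (x : Fin 3 → K) :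
    constForm b2 b3 x ⨯₃ liePoissonForm a22 a23 a32 a33 x
      = ![pencilDet a22 a23 a32 a33 b2 b3 x, 0, 0] := by
  simp only [cross_apply, constForm, liePoissonForm, pencilDet, cons_val_zero, cons_val_one,
    cons_val_two, tail_cons, head_cons, vecCons_inj]
  exact ⟨by ring, by ring, by ring, trivial⟩

lemma mem_genSet_iff (x : Fin 3 → K) :
    x ∈ genSet (liePoissonForm a22 a23 a32 a33) (constForm b2 b3)
      ↔ pencilDet a22 a23 a32 a33 b2 b3 x ≠ 0 := by
  rw [genSet, Set.mem_ofPred_eq, forall_smul_add_smul_ne_zero_iff rfl rfl, ← cross_anticomm,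
    constForm_cross_liePoissonForm]
  simp

lemma curl3_liePoissonForm (x : Fin 3 → K) :
    curl3 (liePoissonForm a22 a23 a32 a33) x = ![a22 + a33, 0, 0] := by
  simp only [curl3, liePoissonForm, cons_val_zero, cons_val_one, cons_val_two, tail_cons,
    head_cons, pd3_neg, pd3_linear, pd3_const]
  simp

lemma curl3_constForm (x : Fin 3 → K) : curl3 (constForm b2 b3) x = 0 := by
  ext j; fin_cases j <;> simp [curl3, constForm]

lemma curl3_flatConnection {x : Fin 3 → K} (hx : pencilDet a22 a23 a32 a33 b2 b3 x ≠ 0) :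
    curl3 (flatConnection a22 a23 a32 a33 b2 b3) x
      = ![-((a22 + a33) * flatnessForm a22 a23 a32 a33 b2 b3)
          / pencilDet a22 a23 a32 a33 b2 b3 x ^ 2, 0, 0] := by
  simp only [curl3, flatConnection, constForm, Pi.smul_apply, smul_eq_mul, div_mul_eq_mul_div,
    mul_zero, cons_val_zero, cons_val_one, cons_val_two, tail_cons, head_cons, pd3_const,
    pd3_const_div (differentiable_pencilDet x) hx, pd3_pencilDet, Pi.single_apply, Fin.reduceEq,
    reduceIte, vecCons_inj, flatnessForm_eq, and_true]
  exact ⟨by ring, by ring, by ring⟩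

lemma differentiableAt_flatConnection {x : Fin 3 → K}
    (hx : pencilDet a22 a23 a32 a33 b2 b3 x ≠ 0) :
    DifferentiableAt K (flatConnection a22 a23 a32 a33 b2 b3) x := by
  unfold flatConnection constForm
  fun_prop (disch := exact hx)

lemma curl3_eq_cross_flatConnection {x : Fin 3 → K}
    (hx : pencilDet a22 a23 a32 a33 b2 b3 x ≠ 0) :
    curl3 (liePoissonForm a22 a23 a32 a33) x
        = flatConnection a22 a23 a32 a33 b2 b3 x ⨯₃ liePoissonForm a22 a23 a32 a33 x
      ∧ curl3 (constForm b2 b3) x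
        = flatConnection a22 a23 a32 a33 b2 b3 x ⨯₃ constForm b2 b3 x := by
  simp only [curl3_liePoissonForm, curl3_constForm, flatConnection, LinearMap.map_smul₂,
    constForm_cross_liePoissonForm, cross_self, smul_zero, and_true, smul_cons, smul_eq_mul,
    div_mul_cancel₀ _ hx, mul_zero, smul_empty]

lemma flatConnection_unique {x l : Fin 3 → K} (hx : pencilDet a22 a23 a32 a33 b2 b3 x ≠ 0)
    (h : curl3 (liePoissonForm a22 a23 a32 a33) x = l ⨯₃ liePoissonForm a22 a23 a32 a33 x)
    (h₁ : curl3 (constForm b2 b3) x = l ⨯₃ constForm b2 b3 x) :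
    l 1 = flatConnection a22 a23 a32 a33 b2 b3 x 1
      ∧ l 2 = flatConnection a22 a23 a32 a33 b2 b3 x 2 := by
  rw [curl3_liePoissonForm] at h
  rw [curl3_constForm] at h₁
  have e := congrFun h 0
  have e₁ := congrFun h₁ 0
  simp only [cross_apply, liePoissonForm, constForm, cons_val_zero, cons_val_one, cons_val_two,
    tail_cons, head_cons, Pi.zero_apply] at e e₁
  simp only [flatConnection, constForm, Pi.smul_apply, smul_eq_mul, cons_val_zero, cons_val_one,
    cons_val_two, tail_cons, head_cons, div_mul_eq_mul_div]
  constructor <;> rw [eq_div_iff hx] <;> unfold pencilDet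
  · linear_combination (-(a32 * x 1 + a33 * x 2)) * e₁ + b3 * e
  · linear_combination (a22 * x 1 + a23 * x 2) * e₁ - b2 * e

lemma flatAt_of_flatnessForm_eq_zero (hQ : flatnessForm a22 a23 a32 a33 b2 b3 = 0)
    {p : Fin 3 → K} (hp : pencilDet a22 a23 a32 a33 b2 b3 p ≠ 0) :
    flatAt (liePoissonForm a22 a23 a32 a33) (constForm b2 b3) p := by
  refine ⟨{x | pencilDet a22 a23 a32 a33 b2 b3 x ≠ 0},
    isOpen_pencilDet_ne_zero, hp,
    flatConnection a22 a23 a32 a33 b2 b3,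
    fun x hx => (differentiableAt_flatConnection hx).differentiableWithinAt,
    fun x hx => ⟨(curl3_eq_cross_flatConnection hx).1,
      (curl3_eq_cross_flatConnection hx).2, ?_⟩⟩
  rw [curl3_flatConnection hx, hQ]
  simp

lemma flatnessForm_eq_zero_of_flatAt (hT : a22 + a33 ≠ 0) {p : Fin 3 → K}
    (hp : pencilDet a22 a23 a32 a33 b2 b3 p ≠ 0)
    (hflat : flatAt (liePoissonForm a22 a23 a32 a33) (constForm b2 b3) p) :
    flatnessForm a22 a23 a32 a33 b2 b3 = 0 := by
  obtain ⟨U, hU, hpU, l, -, hl⟩ := hflat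
  have hnhds : U ∩ {x | pencilDet a22 a23 a32 a33 b2 b3 x ≠ 0} ∈ nhds p :=
    (hU.inter isOpen_pencilDet_ne_zero).mem_nhds ⟨hpU, hp⟩
  have hunique : ∀ x ∈ U ∩ {x | pencilDet a22 a23 a32 a33 b2 b3 x ≠ 0},
      l x 1 = flatConnection a22 a23 a32 a33 b2 b3 x 1
        ∧ l x 2 = flatConnection a22 a23 a32 a33 b2 b3 x 2 :=
    fun x hx => flatConnection_unique hx.2 (hl x hx.1).1 (hl x hx.1).2.1
  have hcurl := curl3_apply_zero_congr (Filter.eventually_of_mem hnhds fun x hx => (hunique x hx).1)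
    (Filter.eventually_of_mem hnhds fun x hx => (hunique x hx).2)
  rw [(hl p hpU).2.2, curl3_flatConnection hp] at hcurl
  rw [Pi.zero_apply, cons_val_zero, eq_comm, div_eq_zero_iff, neg_eq_zero, mul_eq_zero] at hcurl
  exact (hcurl.resolve_right (pow_ne_zero 2 hp)).resolve_left hT

lemma exists_pencilDet_ne_zero (hQ : flatnessForm a22 a23 a32 a33 b2 b3 ≠ 0) :
    ∃ x, pencilDet a22 a23 a32 a33 b2 b3 x ≠ 0 := by
  by_contra! h
  have hα : b2 * a32 - b3 * a22 = 0 := by simpa [pencilDet] using h ![0, 1, 0]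
  have hβ : b2 * a33 - b3 * a23 = 0 := by simpa [pencilDet] using h ![0, 0, 1]
  exact hQ (by rw [flatnessForm_eq, hα, hβ]; ring)

lemma forall_flatAt_iff (hT : a22 + a33 ≠ 0) :
    (∀ p ∈ genSet (liePoissonForm a22 a23 a32 a33) (constForm b2 b3),
        flatAt (liePoissonForm a22 a23 a32 a33) (constForm b2 b3) p)
      ↔ flatnessForm a22 a23 a32 a33 b2 b3 = 0 := by
  simp only [mem_genSet_iff]
  refine ⟨fun h => ?_, fun hQ p hp => flatAt_of_flatnessForm_eq_zero hQ hp⟩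
  by_contra hQ
  obtain ⟨p, hp⟩ := exists_pencilDet_ne_zero hQ
  exact hQ (flatnessForm_eq_zero_of_flatAt hT hp (h p hp))

lemma exists_flatnessForm_ne_zero_iff :
    (∃ b2 b3, flatnessForm a22 a23 a32 a33 b2 b3 ≠ 0) ↔ ¬(a23 = 0 ∧ a32 = 0 ∧ a22 = a33) := by
  refine ⟨?_, fun h => ?_⟩
  · rintro ⟨b2, b3, hQ⟩ ⟨rfl, rfl, rfl⟩
    simp [flatnessForm] at hQ
  · by_contra! hQ
    have h10 : a32 = 0 := by simpa [flatnessForm] using hQ 1 0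
    have h01 : a23 = 0 := by simpa [flatnessForm] using hQ 0 1
    have h11 : a32 + (a33 - a22) - a23 = 0 := by simpa [flatnessForm] using hQ 1 1
    exact h ⟨h01, h10, by linear_combination h10 - h01 - h11⟩

lemma exists_nonflat_iff (hT : a22 + a33 ≠ 0) :
    (∃ b2 b3, (genSet (liePoissonForm a22 a23 a32 a33) (constForm b2 b3)).Nonempty
        ∧ ∃ p ∈ genSet (liePoissonForm a22 a23 a32 a33) (constForm b2 b3),
          ¬flatAt (liePoissonForm a22 a23 a32 a33) (constForm b2 b3) p)
      ↔ ¬(a23 = 0 ∧ a32 = 0 ∧ a22 = a33) := by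
  rw [← exists_flatnessForm_ne_zero_iff]
  refine exists₂_congr fun b2 b3 => ?_
  rw [ne_eq, ← forall_flatAt_iff hT]
  push Not
  exact ⟨fun ⟨_, hp⟩ => hp, fun ⟨p, hp⟩ => ⟨⟨p, hp.1⟩, p, hp⟩⟩

end LinearPoissonPair

/-- let `𝒜` be a 3-dimensional non-unimodular Lie algebra and
`I₀ = {a | tr(ad a) = 0}` its unimodular ideal. Then `I₀` is a 2-dimensional abelian
ideal; for `u, v ∉ I₀` the restrictions `ad v|_{I₀}` and `ad u|_{I₀}` are proportional by
a nonzero scalar. Moreover, choosing a basis `{e₁,e₂,e₃}` with `I₀ = span{e₂,e₃}`,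
`[e₁,e₂] = a₂₂e₂ + a₂₃e₃`, `[e₁,e₃] = a₃₂e₂ + a₃₃e₃`, and identifying `𝒜*` with `K³`
(so that the Lie–Poisson structure `Λ` is represented by the 1-form with coefficient
vector `w(x) = (0, -(a₃₂x₂+a₃₃x₃), a₂₂x₂+a₂₃x₃))` and the constant compatible structure
`Λ₁ = ∂₁∧(b₂∂₂+b₃∂₃)` by `w₁ = (0,-b₃,b₂)`): `𝒜*` carries a generic non-flat linear
Poisson pair iff `ad e₁|_{I₀}` is not a scalar multiple of the identity, and for given
`(b₂,b₃)` the pair is flat exactly when `a₃₂b₂² + (a₃₃-a₂₂)b₂b₃ - a₂₃b₃² = 0`. -/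
theorem stmt_18 {L : Type*} [LieRing L] [LieAlgebra K L] [FiniteDimensional K L]
    (hdim : Module.finrank K L = 3)
    (hnu : ∃ u : L, LinearMap.trace K L ((LieAlgebra.ad K L u : L →ₗ[K] L)) ≠ 0)
    (I0 : Submodule K L)
    (hI0 : I0 = LinearMap.ker ((LinearMap.trace K L).comp
      (LieAlgebra.ad K L : L →ₗ[K] Module.End K L)))
    (e : Module.Basis (Fin 3) K L) (a22 a23 a32 a33 : K)
    (hspan : I0 = Submodule.span K ({e 1, e 2} : Set L))
    (hb1 : ⁅e 0, e 1⁆ = a22 • e 1 + a23 • e 2)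
    (hb2 : ⁅e 0, e 2⁆ = a32 • e 1 + a33 • e 2)
    (w : (Fin 3 → K) → (Fin 3 → K))
    (hw : ∀ x, w x = ![0, -(a32 * x 1 + a33 * x 2), a22 * x 1 + a23 * x 2])
    (w1 : K → K → (Fin 3 → K) → (Fin 3 → K))
    (hw1 : ∀ b2 b3 x, w1 b2 b3 x = ![0, -b3, b2]) :
    (∀ y : L, ∀ x ∈ I0, ⁅y, x⁆ ∈ I0)
    ∧ Module.finrank K I0 = 2
    ∧ (∀ x ∈ I0, ∀ y ∈ I0, ⁅x, y⁆ = (0 : L))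
    ∧ (∀ u v : L, u ∉ I0 → v ∉ I0 →
        ∃ s : K, s ≠ 0 ∧ ∀ x ∈ I0, ⁅v, x⁆ = s • ⁅u, x⁆)
    ∧ ((∃ b2 b3 : K, (genSet w (w1 b2 b3)).Nonempty
          ∧ ∃ p ∈ genSet w (w1 b2 b3), ¬ flatAt w (w1 b2 b3) p)
        ↔ ¬ (a23 = 0 ∧ a32 = 0 ∧ a22 = a33))
    ∧ (∀ b2 b3 : K, (∀ p ∈ genSet w (w1 b2 b3), flatAt w (w1 b2 b3) p)
        ↔ a32 * b2 ^ 2 + (a33 - a22) * b2 * b3 - a23 * b3 ^ 2 = 0) := by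
  change I0 = LinearMap.ker (traceAd K L) at hI0
  subst hI0
  obtain rfl : w = liePoissonForm a22 a23 a32 a33 := funext hw
  obtain rfl : w1 = constForm := funext₃ hw1
  have hmem : ∀ i, i ≠ 0 → e i ∈ LinearMap.ker (traceAd K L) := by
    intro i hi
    rw [hspan]
    fin_cases i
    exacts [absurd rfl hi, Submodule.subset_span (by simp), Submodule.subset_span (by simp)]
  have hder : ∀ x y : L, ⁅x, y⁆ ∈ Submodule.span K {e 1, e 2} := fun x y => by
    rw [← hspan]
    exact traceAd_lie x y
  have habel : ∀ x ∈ LinearMap.ker (traceAd K L), ∀ y ∈ LinearMap.ker (traceAd K L),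
      ⁅x, y⁆ = 0 := by
    rw [hspan]
    exact fun x hx y hy => lie_eq_zero_of_mem_span_pair
      (lie_eq_zero_of_traceAd_eq_zero e hder (hmem 1 (by decide)) (hmem 2 (by decide))) hx hy
  have htraceAd : traceAd K L ≠ 0 := fun h => hnu.elim fun u hu => hu (LinearMap.congr_fun h u)
  have hT : a22 + a33 ≠ 0 := by
    have h0 : traceAd K L (e 0) = a22 + a33 := by
      simp [traceAd_eq_sum_repr e, Fin.sum_univ_three, hb1, hb2]
    exact h0 ▸ apply_basis_ne_zero_of_ne_zero htraceAd e hmem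
  refine ⟨fun y x _ => traceAd_lie y x, ?_, habel, fun u v hu hv => ?_, exists_nonflat_iff hT,
    fun b2 b3 => forall_flatAt_iff hT⟩
  · have := Module.Dual.finrank_ker_add_one_of_ne_zero htraceAd
    omega
  · exact ⟨_, div_ne_zero hv hu, fun x hx => lie_eq_smul_lie_of_isAbelian_ker _ habel hu v hx⟩
end

section
/- Let 𝒜 be a 3-dimensional vector space with two compatible Lie brackets [·,·] and [·,·]_1, both non-unimodular, with 2-dimensional unimodular ideals I and I_1 respectively. If the associated Lie–Poisson pair (Λ,Λ_1) on 𝒜* is non-flat, then I = I_1; i.e. if I ≠ I_1 then the pair (Λ,Λ_1) is flat. -/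
open Matrix

variable {K : Type*} [RCLike K]

/-- The coefficient vector of the `(m-2)`-form (here 1-form) representing the
Lie–Poisson structure of the bracket `B` on the dual space `K³`, with respect to the
standard volume form: `w(x)ᵢ = x·B(e_{i+1}, e_{i+2})` (indices mod 3), so that
`(α×β)·w(x) = x·B(α,β)`. -/
noncomputable def lpVec (B : (Fin 3 → K) →ₗ[K] (Fin 3 → K) →ₗ[K] (Fin 3 → K))
    (x : Fin 3 → K) : Fin 3 → K :=
  fun i => x ⬝ᵥ (B (Pi.single (i + 1) (1 : K)) (Pi.single (i + 2) (1 : K)))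

/-! The modular covectors `c, c₁` of the two brackets (`tr ad_y = c ⬝ y`) are the curls of the
Lie–Poisson 1-forms `w, w₁`. Pairing them with `w, w₁` gives, by Jacobi, compatibility and
`tr ad_[a,b] = 0`, the relations `c ⬝ w = c₁ ⬝ w₁ = 0` and `c ⬝ w₁ = -(c₁ ⬝ w) = x ⬝ u`, where
`u = Σ_cyc [[e₀, e₁], e₂]₁` is orthogonal to `c` and `c₁`. Hence `λ = (c × c₁) / (x ⬝ u)`
satisfies `λ × w = c` and `λ × w₁ = c₁`, and it is closed: `curl λ = ∇(x ⬝ u)⁻¹ × (c × c₁)`,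
and the gradient is parallel to `u`, hence to `c × c₁`. If `I ≠ I₁`, then `c × c₁ ≠ 0`, and
`x ⬝ u ≠ 0` at generic points: otherwise `w` and `w₁` would both be orthogonal to `c` and `c₁`,
hence parallel. -/

abbrev Bracket3 (R : Type*) [CommRing R] := (Fin 3 → R) →ₗ[R] (Fin 3 → R) →ₗ[R] (Fin 3 → R)

section Algebra

variable {R : Type*} [CommRing R]

lemma apply_swap_eq_neg {P : Bracket3 R} (hP : ∀ x, P x x = 0) (a b : Fin 3 → R) :
    P b a = -P a b := by
  have h := hP (a + b)
  simp only [map_add, LinearMap.add_apply, hP, zero_add, add_zero] at h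
  exact eq_neg_of_add_eq_zero_left h

structure IsLieBracket (P : Bracket3 R) : Prop where
  self_eq_zero : ∀ x, P x x = 0
  jacobi : ∀ x y z, P (P x y) z + P (P y z) x + P (P z x) y = 0

namespace IsLieBracket

variable {P Q : Bracket3 R}

lemma apply_bracket (hP : IsLieBracket P) (a b : Fin 3 → R) :
    P (P a b) = P a * P b - P b * P a := by
  refine LinearMap.ext fun z => ?_
  have h := hP.jacobi a b z
  rw [apply_swap_eq_neg hP.self_eq_zero a (P b z), apply_swap_eq_neg hP.self_eq_zero b (P z a),
    apply_swap_eq_neg hP.self_eq_zero a z, map_neg] at h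
  rw [LinearMap.sub_apply, Module.End.mul_apply, Module.End.mul_apply]
  linear_combination h

lemma trace_apply_bracket (hP : IsLieBracket P) (a b : Fin 3 → R) :
    LinearMap.trace R _ (P (P a b)) = 0 := by
  rw [hP.apply_bracket, map_sub, LinearMap.trace_mul_comm, sub_self]

lemma add (hP : IsLieBracket P) (hQ : IsLieBracket Q)
    (h : ∀ x y z, (P + Q) ((P + Q) x y) z + (P + Q) ((P + Q) y z) x
      + (P + Q) ((P + Q) z x) y = 0) :
    IsLieBracket (P + Q) :=
  ⟨fun x => by simp [hP.self_eq_zero, hQ.self_eq_zero], h⟩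

end IsLieBracket

lemma trace_eq_sum_apply_single (f : (Fin 3 → R) →ₗ[R] (Fin 3 → R)) :
    LinearMap.trace R _ f = ∑ i, f (Pi.single i 1) i := by
  rw [LinearMap.trace_eq_matrix_trace R (Pi.basisFun R (Fin 3)),
    LinearMap.toMatrix_eq_toMatrix', Matrix.trace]
  simp [LinearMap.toMatrix'_apply]

lemma bracket_apply_eq_sum (P : Bracket3 R) (v y : Fin 3 → R) :
    P v y = ∑ i, v i • P (Pi.single i 1) y := by
  conv_lhs => rw [pi_eq_sum_univ' v]
  simp [map_sum]

noncomputable def modularVec (P : Bracket3 R) : Fin 3 → R :=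
  fun i => LinearMap.trace R _ (P (Pi.single i 1))

lemma trace_apply_eq_modularVec_dotProduct (P : Bracket3 R) (y : Fin 3 → R) :
    LinearMap.trace R _ (P y) = modularVec P ⬝ᵥ y := by
  conv_lhs => rw [pi_eq_sum_univ' y]
  simp [map_sum, modularVec, dotProduct, mul_comm]

lemma modularVec_add (P Q : Bracket3 R) : modularVec (P + Q) = modularVec P + modularVec Q := by
  ext i
  simp [modularVec]

lemma modularVec_ne_zero {P : Bracket3 R} {x : Fin 3 → R}
    (h : LinearMap.trace R _ (P x) ≠ 0) : modularVec P ≠ 0 := by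
  rintro h0
  rw [trace_apply_eq_modularVec_dotProduct, h0, zero_dotProduct] at h
  exact h rfl

lemma IsLieBracket.modularVec_dotProduct_bracket {P : Bracket3 R} (hP : IsLieBracket P)
    (a b : Fin 3 → R) : modularVec P ⬝ᵥ P a b = 0 := by
  rw [← trace_apply_eq_modularVec_dotProduct, hP.trace_apply_bracket]

lemma modularVec_dotProduct_add_modularVec_dotProduct {P Q : Bracket3 R}
    (hP : IsLieBracket P) (hQ : IsLieBracket Q) (hPQ : IsLieBracket (P + Q)) (a b : Fin 3 → R) :
    modularVec P ⬝ᵥ Q a b + modularVec Q ⬝ᵥ P a b = 0 := by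
  have h := hPQ.modularVec_dotProduct_bracket a b
  simp only [modularVec_add, LinearMap.add_apply, add_dotProduct, dotProduct_add,
    hP.modularVec_dotProduct_bracket, hQ.modularVec_dotProduct_bracket] at h
  linear_combination h

def jacobiator (P Q : Bracket3 R) : Fin 3 → R :=
  Q (P (Pi.single 0 1) (Pi.single 1 1)) (Pi.single 2 1)
    + Q (P (Pi.single 1 1) (Pi.single 2 1)) (Pi.single 0 1)
    + Q (P (Pi.single 2 1) (Pi.single 0 1)) (Pi.single 1 1)

lemma IsLieBracket.jacobiator_self {P : Bracket3 R} (hP : IsLieBracket P) :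
    jacobiator P P = 0 :=
  hP.jacobi _ _ _

lemma jacobiator_add_jacobiator {P Q : Bracket3 R}
    (hP : IsLieBracket P) (hQ : IsLieBracket Q) (hPQ : IsLieBracket (P + Q)) :
    jacobiator P Q + jacobiator Q P = 0 := by
  have h := hPQ.jacobiator_self
  simp only [jacobiator, LinearMap.add_apply, map_add] at h
  have hP' := hP.jacobiator_self
  have hQ' := hQ.jacobiator_self
  simp only [jacobiator] at hP' hQ' ⊢
  linear_combination h - hP' - hQ'

lemma IsLieBracket.modularVec_dotProduct_jacobiator {Q : Bracket3 R} (hQ : IsLieBracket Q)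
    (P : Bracket3 R) : modularVec Q ⬝ᵥ jacobiator P Q = 0 := by
  simp only [jacobiator, dotProduct_add, hQ.modularVec_dotProduct_bracket, add_zero]

lemma modularVec_dotProduct_jacobiator_left {P Q : Bracket3 R}
    (hP : IsLieBracket P) (hQ : IsLieBracket Q) (hPQ : IsLieBracket (P + Q)) :
    modularVec P ⬝ᵥ jacobiator P Q = 0 := by
  have h := congrArg (modularVec Q ⬝ᵥ ·) hP.jacobiator_self
  have hmix := modularVec_dotProduct_add_modularVec_dotProduct hP hQ hPQ
  simp only [jacobiator, dotProduct_add, dotProduct_zero] at h ⊢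
  linear_combination hmix (P (Pi.single 0 1) (Pi.single 1 1)) (Pi.single 2 1)
    + hmix (P (Pi.single 1 1) (Pi.single 2 1)) (Pi.single 0 1)
    + hmix (P (Pi.single 2 1) (Pi.single 0 1)) (Pi.single 1 1) - h

end Algebra

section CrossProduct

variable {F : Type*} [Field F]

lemma exists_smul_eq_of_cross_eq_zero {v w : Fin 3 → F} (hv : v ≠ 0) (h : v ⨯₃ w = 0) :
    ∃ r : F, r • v = w := by
  by_contra! hr
  exact crossProduct_ne_zero_iff_linearIndependent.mpr ((LinearIndependent.pair_iff' hv).mpr hr) h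

lemma cross_eq_zero_of_cross_eq_zero {v w w₁ : Fin 3 → F} (hv : v ≠ 0) (hw : v ⨯₃ w = 0)
    (hw₁ : v ⨯₃ w₁ = 0) : w ⨯₃ w₁ = 0 := by
  obtain ⟨r, rfl⟩ := exists_smul_eq_of_cross_eq_zero hv hw
  obtain ⟨r₁, rfl⟩ := exists_smul_eq_of_cross_eq_zero hv hw₁
  simp [cross_self]

lemma ker_trace_comp_eq_of_cross_eq_zero {P Q : Bracket3 F} (hP : modularVec P ≠ 0)
    (hQ : modularVec Q ≠ 0) (h : modularVec P ⨯₃ modularVec Q = 0) :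
    LinearMap.ker ((LinearMap.trace F _).comp P)
      = LinearMap.ker ((LinearMap.trace F _).comp Q) := by
  obtain ⟨r, hr⟩ := exists_smul_eq_of_cross_eq_zero hP h
  have hr₀ : r ≠ 0 := by
    rintro rfl
    exact hQ (by rw [← hr, zero_smul])
  have hPQ : (LinearMap.trace F _).comp Q = r • (LinearMap.trace F _).comp P := by
    ext y
    simp [trace_apply_eq_modularVec_dotProduct, ← hr]
  rw [hPQ, LinearMap.ker_smul _ _ hr₀]

end CrossProduct

lemma hasFDerivAt_dotProduct (u x : Fin 3 → K) :
    HasFDerivAt (fun y => y ⬝ᵥ u) (LinearMap.toContinuousLinearMap (dotProductEquiv K _ u)) x := by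
  convert (LinearMap.toContinuousLinearMap (dotProductEquiv K _ u)).hasFDerivAt using 1
  ext y
  simp [dotProduct_comm]

lemma pd3_dotProduct (u x : Fin 3 → K) (i : Fin 3) : pd3 i (fun y => y ⬝ᵥ u) x = u i := by
  simp [pd3, (hasFDerivAt_dotProduct u x).fderiv]

noncomputable def grad3 (f : (Fin 3 → K) → K) (x : Fin 3 → K) : Fin 3 → K :=
  fun i => pd3 i f x

lemma curl3_smul_const {f : (Fin 3 → K) → K} {x : Fin 3 → K} (hf : DifferentiableAt K f x)
    (v : Fin 3 → K) : curl3 (fun y => f y • v) x = grad3 f x ⨯₃ v := by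
  have h : ∀ i j, pd3 i (fun y => f y * v j) x = grad3 f x i * v j := fun i j => by
    simp [pd3, grad3, fderiv_mul_const hf, mul_comm]
  ext k
  fin_cases k <;> simp [curl3, h, cross_apply]

lemma grad3_inv_dotProduct {u x : Fin 3 → K} (hx : x ⬝ᵥ u ≠ 0) :
    grad3 (fun y => (y ⬝ᵥ u)⁻¹) x = -((x ⬝ᵥ u) ^ 2)⁻¹ • u := by
  have hinv : HasFDerivAt (fun y => (y ⬝ᵥ u)⁻¹) _ x :=
    (hasFDerivAt_inv hx).comp x (hasFDerivAt_dotProduct u x)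
  ext i
  simp [grad3, pd3, hinv.fderiv, mul_comm]

lemma modularVec_dotProduct_lpVec {P Q : Bracket3 K} (hP : ∀ x, P x x = 0)
    (hQ : ∀ x, Q x x = 0) (x : Fin 3 → K) :
    modularVec P ⬝ᵥ lpVec Q x = x ⬝ᵥ jacobiator P Q := by
  simp only [jacobiator, bracket_apply_eq_sum Q (P _ _)]
  simp only [modularVec, trace_eq_sum_apply_single, lpVec, dotProduct, Fin.sum_univ_three,
    apply_swap_eq_neg hP (Pi.single 0 1) (Pi.single 1 1),
    apply_swap_eq_neg hP (Pi.single 0 1) (Pi.single 2 1),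
    apply_swap_eq_neg hP (Pi.single 1 1) (Pi.single 2 1),
    apply_swap_eq_neg hQ (Pi.single 0 1) (Pi.single 1 1),
    apply_swap_eq_neg hQ (Pi.single 0 1) (Pi.single 2 1),
    apply_swap_eq_neg hQ (Pi.single 1 1) (Pi.single 2 1), hP, hQ, Fin.isValue, Fin.reduceAdd,
    Pi.add_apply, Pi.smul_apply, Pi.neg_apply, Pi.zero_apply, smul_eq_mul, smul_zero, add_zero,
    zero_add]
  ring

lemma curl3_lpVec {Q : Bracket3 K} (hQ : ∀ x, Q x x = 0) (x : Fin 3 → K) :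
    curl3 (lpVec Q) x = modularVec Q := by
  have h : ∀ j i, pd3 i (fun y => lpVec Q y j) x
      = Q (Pi.single (j + 1) 1) (Pi.single (j + 2) 1) i := fun j i => pd3_dotProduct _ x i
  ext k
  fin_cases k <;>
    simp [curl3, h, modularVec, trace_eq_sum_apply_single, Fin.sum_univ_three, hQ,
      apply_swap_eq_neg hQ (Pi.single 0 1) (Pi.single 1 1),
      apply_swap_eq_neg hQ (Pi.single 0 1) (Pi.single 2 1),
      apply_swap_eq_neg hQ (Pi.single 1 1) (Pi.single 2 1)] <;> ring

lemma mem_genSet_iff_s19 {w w₁ : (Fin 3 → K) → Fin 3 → K} {x : Fin 3 → K} :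
    x ∈ genSet w w₁ ↔ w x ⨯₃ w₁ x ≠ 0 := by
  rw [crossProduct_ne_zero_iff_linearIndependent, LinearIndependent.pair_iff]
  exact forall₂_congr fun _ _ => not_imp_not

theorem flatAt_of_curl3_eq {w w₁ : (Fin 3 → K) → Fin 3 → K} {c c₁ u p : Fin 3 → K}
    (hcurl : ∀ x, curl3 w x = c) (hcurl₁ : ∀ x, curl3 w₁ x = c₁)
    (hcw : ∀ x, c ⬝ᵥ w x = 0) (hc₁w : ∀ x, c₁ ⬝ᵥ w x = -(x ⬝ᵥ u))
    (hcw₁ : ∀ x, c ⬝ᵥ w₁ x = x ⬝ᵥ u) (hc₁w₁ : ∀ x, c₁ ⬝ᵥ w₁ x = 0)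
    (hcu : c ⬝ᵥ u = 0) (hc₁u : c₁ ⬝ᵥ u = 0) (hp : p ⬝ᵥ u ≠ 0) : flatAt w w₁ p := by
  have hdiff : ∀ x, x ⬝ᵥ u ≠ 0 → DifferentiableAt K (fun y => (y ⬝ᵥ u)⁻¹) x := fun x hx =>
    (hasFDerivAt_dotProduct u x).differentiableAt.inv hx
  refine ⟨{x | x ⬝ᵥ u ≠ 0}, isOpen_ne_fun (by fun_prop) continuous_const, hp,
    fun x => (x ⬝ᵥ u)⁻¹ • c ⨯₃ c₁,
    fun x hx => ((hdiff x hx).smul_const _).differentiableWithinAt, fun x hx => ⟨?_, ?_, ?_⟩⟩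
  · rw [hcurl, map_smul, LinearMap.smul_apply, cross_cross_eq_smul_sub_smul, hcw, hc₁w]
    simp [smul_smul, inv_mul_cancel₀ hx]
  · rw [hcurl₁, map_smul, LinearMap.smul_apply, cross_cross_eq_smul_sub_smul, hcw₁, hc₁w₁]
    simp [smul_smul, inv_mul_cancel₀ hx]
  · rw [curl3_smul_const (hdiff x hx), grad3_inv_dotProduct hx, map_smul, LinearMap.smul_apply,
      cross_cross_eq_smul_sub_smul', dotProduct_comm u, hcu, hc₁u]
    simp

theorem dotProduct_ne_zero_of_mem_genSet {w w₁ : (Fin 3 → K) → Fin 3 → K} {c c₁ u p : Fin 3 → K}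
    (hv : c ⨯₃ c₁ ≠ 0) (hcw : c ⬝ᵥ w p = 0) (hc₁w : c₁ ⬝ᵥ w p = -(p ⬝ᵥ u))
    (hcw₁ : c ⬝ᵥ w₁ p = p ⬝ᵥ u) (hc₁w₁ : c₁ ⬝ᵥ w₁ p = 0) (hp : p ∈ genSet w w₁) :
    p ⬝ᵥ u ≠ 0 := by
  intro h0
  have hperp : ∀ z, c ⬝ᵥ z = 0 → c₁ ⬝ᵥ z = 0 → c ⨯₃ c₁ ⨯₃ z = 0 := fun z hz hz₁ => by
    rw [cross_cross_eq_smul_sub_smul, hz, hz₁, zero_smul, zero_smul, sub_zero]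
  exact mem_genSet_iff_s19.mp hp <| cross_eq_zero_of_cross_eq_zero hv
    (hperp _ hcw (by rw [hc₁w, h0, neg_zero])) (hperp _ (by rw [hcw₁, h0]) hc₁w₁)

theorem stmt_19_general
    (B B1 : (Fin 3 → K) →ₗ[K] (Fin 3 → K) →ₗ[K] (Fin 3 → K))
    (hBalt : ∀ x, B x x = 0)
    (hBjac : ∀ x y z, B (B x y) z + B (B y z) x + B (B z x) y = 0)
    (hB1alt : ∀ x, B1 x x = 0)
    (hB1jac : ∀ x y z, B1 (B1 x y) z + B1 (B1 y z) x + B1 (B1 z x) y = 0)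
    (hcompat : ∀ x y z, (B + B1) ((B + B1) x y) z + (B + B1) ((B + B1) y z) x
      + (B + B1) ((B + B1) z x) y = 0)
    (hnu : ∃ x, LinearMap.trace K (Fin 3 → K) (B x) ≠ 0)
    (hnu1 : ∃ x, LinearMap.trace K (Fin 3 → K) (B1 x) ≠ 0)
    (I I1 : Submodule K (Fin 3 → K))
    (hI : I = LinearMap.ker ((LinearMap.trace K (Fin 3 → K)).comp B))
    (hI1 : I1 = LinearMap.ker ((LinearMap.trace K (Fin 3 → K)).comp B1))
    (hne : I ≠ I1) :
    ∀ p ∈ genSet (lpVec B) (lpVec B1), flatAt (lpVec B) (lpVec B1) p := by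
  have hL : IsLieBracket B := ⟨hBalt, hBjac⟩
  have hL₁ : IsLieBracket B1 := ⟨hB1alt, hB1jac⟩
  have hLs : IsLieBracket (B + B1) := hL.add hL₁ hcompat
  have hcw (x) : modularVec B ⬝ᵥ lpVec B x = 0 := by
    rw [modularVec_dotProduct_lpVec hBalt hBalt, hL.jacobiator_self, dotProduct_zero]
  have hc₁w₁ (x) : modularVec B1 ⬝ᵥ lpVec B1 x = 0 := by
    rw [modularVec_dotProduct_lpVec hB1alt hB1alt, hL₁.jacobiator_self, dotProduct_zero]
  have hcw₁ := modularVec_dotProduct_lpVec hBalt hB1alt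
  have hc₁w (x) : modularVec B1 ⬝ᵥ lpVec B x = -(x ⬝ᵥ jacobiator B B1) := by
    rw [modularVec_dotProduct_lpVec hB1alt hBalt, ← dotProduct_neg,
      eq_neg_of_add_eq_zero_right (jacobiator_add_jacobiator hL hL₁ hLs)]
  have hv : modularVec B ⨯₃ modularVec B1 ≠ 0 := by
    obtain ⟨x, hx⟩ := hnu
    obtain ⟨x₁, hx₁⟩ := hnu1
    refine fun h => hne ?_
    rw [hI, hI1]
    exact ker_trace_comp_eq_of_cross_eq_zero (modularVec_ne_zero hx) (modularVec_ne_zero hx₁) h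
  intro p hp
  exact flatAt_of_curl3_eq (curl3_lpVec hBalt) (curl3_lpVec hB1alt) hcw hc₁w hcw₁ hc₁w₁
    (modularVec_dotProduct_jacobiator_left hL hL₁ hLs) (hL₁.modularVec_dotProduct_jacobiator B)
    (dotProduct_ne_zero_of_mem_genSet hv (hcw p) (hc₁w p) (hcw₁ p) (hc₁w₁ p) hp)

/-- let `𝒜 = K³` carry two compatible Lie brackets `B, B₁`, both
non-unimodular, with 2-dimensional unimodular ideals `I, I₁`. If `I ≠ I₁` then the
associated Lie–Poisson pair `(Λ, Λ₁)` on `𝒜*` is flat (at every generic point); i.e. a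
non-flat pair forces `I = I₁`. -/
theorem stmt_19
    (B B1 : (Fin 3 → K) →ₗ[K] (Fin 3 → K) →ₗ[K] (Fin 3 → K))
    (hBalt : ∀ x, B x x = 0)
    (hBjac : ∀ x y z, B (B x y) z + B (B y z) x + B (B z x) y = 0)
    (hB1alt : ∀ x, B1 x x = 0)
    (hB1jac : ∀ x y z, B1 (B1 x y) z + B1 (B1 y z) x + B1 (B1 z x) y = 0)
    (hcompat : ∀ x y z, (B + B1) ((B + B1) x y) z + (B + B1) ((B + B1) y z) x
      + (B + B1) ((B + B1) z x) y = 0)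
    (hnu : ∃ x, LinearMap.trace K (Fin 3 → K) (B x) ≠ 0)
    (hnu1 : ∃ x, LinearMap.trace K (Fin 3 → K) (B1 x) ≠ 0)
    (I I1 : Submodule K (Fin 3 → K))
    (hI : I = LinearMap.ker ((LinearMap.trace K (Fin 3 → K)).comp B))
    (hI1 : I1 = LinearMap.ker ((LinearMap.trace K (Fin 3 → K)).comp B1))
    (hdI : Module.finrank K I = 2) (hdI1 : Module.finrank K I1 = 2)
    (hne : I ≠ I1) :
    ∀ p ∈ genSet (lpVec B) (lpVec B1), flatAt (lpVec B) (lpVec B1) p :=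
  stmt_19_general B B1 hBalt hBjac hB1alt hB1jac hcompat hnu hnu1 I I1 hI hI1 hne
end
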